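/- arXiv:0911.2287 — 2 statements merged into one kernel-verified Lean document; each statement's English description precedes it below -/
import Mathlib

section
/- Let s₁, …, s_l be nonzero homogeneous elements of R, say s_j ∈ R_{d_j}. Assume that for every d ∈ D and every value γ ∈ ν(R_d ∖ {0}) there exist nonnegative integers m₁, …, m_l with Σ_j m_j d_j = d and Σ_j m_j ν(s_j) = γ. Then R equals the k-subalgebra generated by s₁, …, s_l. (This is the algebraic engine of Proposition 5.2, where it yields the finite generation of the Cox ring R = ⊕ H⁰(P(E), O(w) ⊗ π*O(Σ w_i D_i)) from the finite generation of the semigroup of valuation vectors.) -/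
/-!
Fix a degree `e` and a nonzero `t ∈ R_e`. The hypothesis gives a monomial `u` in the `s j` with
`u ∈ R_e` and `ν u = ν t`. Both lie in the leaf at `ν t`, which is one-dimensional, so some
`t - c • u` is either zero or of strictly larger value. Since `R_e` is finite-dimensional, the
subspaces `R_e ∩ R_{≥ a}` can shrink only finitely often, so this descent terminates and writes
`t` as a linear combination of monomials.
-/

open Module

lemma exists_smul_eq_of_rank_le_one {K V : Type*} [DivisionRing K] [AddCommGroup V] [Module K V]
    (h : Module.rank K V ≤ 1) {q : V} (hq : q ≠ 0) (p : V) : ∃ c : K, c • q = p := by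
  obtain ⟨v, hv⟩ := rank_le_one_iff.mp h
  obtain ⟨a, rfl⟩ := hv q
  obtain ⟨b, rfl⟩ := hv p
  have ha : a ≠ 0 := by rintro rfl; simp at hq
  exact ⟨b * a⁻¹, by rw [smul_smul, inv_mul_cancel_right₀ ha]⟩

lemma Submodule.exists_sub_smul_mem_of_rank_quotient_le_one {K V : Type*} [DivisionRing K]
    [AddCommGroup V] [Module K V] {W N : Submodule K V}
    (h : Module.rank K (W ⧸ N.comap W.subtype) ≤ 1) {t u : V} (ht : t ∈ W) (hu : u ∈ W)
    (huN : u ∉ N) : ∃ c : K, t - c • u ∈ N := by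
  have hu0 : (N.comap W.subtype).mkQ ⟨u, hu⟩ ≠ 0 := by
    simpa [Submodule.Quotient.mk_eq_zero] using huN
  obtain ⟨c, hc⟩ := exists_smul_eq_of_rank_le_one h hu0 ((N.comap W.subtype).mkQ ⟨t, ht⟩)
  refine ⟨c, ?_⟩
  have hq : (N.comap W.subtype).mkQ (⟨t, ht⟩ - c • ⟨u, hu⟩) = 0 := by
    rw [map_sub, map_smul, hc, sub_self]
  exact (Submodule.Quotient.mk_eq_zero (N.comap W.subtype)).mp hq

lemma Submodule.mem_iff_of_coe_eq {K V : Type*} [Semiring K] [AddCommMonoid V] [Module K V]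
    {W : Submodule K V} {p : V → Prop} (h : (W : Set V) = {0} ∪ {s | s ≠ 0 ∧ p s}) {x : V} :
    x ∈ W ↔ x = 0 ∨ p x := by
  rw [← SetLike.mem_coe, h]
  by_cases hx : x = 0 <;> simp [hx]

section Descent

variable {k M Γ : Type*} [DivisionRing k] [AddCommGroup M] [Module k M] [LinearOrder Γ]
  {ν : M → Γ} {Rge Rgt : Γ → Submodule k M}

lemma finrank_inf_lt_of_lt_val (hRge : ∀ a, (Rge a : Set M) = {0} ∪ {s | s ≠ 0 ∧ a ≤ ν s})
    {V : Submodule k M} [FiniteDimensional k V] {t : M} (ht : t ∈ V) (ht0 : t ≠ 0) {b : Γ}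
    (hb : ν t < b) : finrank k ↥(V ⊓ Rge b) < finrank k ↥(V ⊓ Rge (ν t)) := by
  have hmem : ∀ {a x}, x ∈ Rge a ↔ x = 0 ∨ a ≤ ν x := Submodule.mem_iff_of_coe_eq (hRge _)
  refine Submodule.finrank_lt_finrank_of_lt (SetLike.lt_iff_le_and_exists.mpr ⟨?_, ?_⟩)
  · refine inf_le_inf_left _ fun x hx => ?_
    rcases hmem.mp hx with hx0 | hbx
    · exact hmem.mpr (Or.inl hx0)
    · exact hmem.mpr (Or.inr (hb.le.trans hbx))
  · refine ⟨t, ⟨ht, hmem.mpr (Or.inr le_rfl)⟩, fun htb => ?_⟩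
    rcases hmem.mp htb.2 with ht0' | hbt
    · exact ht0 ht0'
    · exact (hb.trans_le hbt).false

theorem le_of_forall_val_attained
    (hRge : ∀ a, (Rge a : Set M) = {0} ∪ {s | s ≠ 0 ∧ a ≤ ν s})
    (hRgt : ∀ a, (Rgt a : Set M) = {0} ∪ {s | s ≠ 0 ∧ a < ν s})
    (hleaf : ∀ a, Module.rank k (↥(Rge a) ⧸ (Rgt a).comap (Rge a).subtype) ≤ 1)
    {V A : Submodule k M} [FiniteDimensional k V]
    (hatt : ∀ t ∈ V, t ≠ 0 → ∃ u ∈ A, u ∈ V ∧ u ≠ 0 ∧ ν u = ν t) : V ≤ A := by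
  have hge : ∀ {a x}, x ∈ Rge a ↔ x = 0 ∨ a ≤ ν x := Submodule.mem_iff_of_coe_eq (hRge _)
  have hgt : ∀ {a x}, x ∈ Rgt a ↔ x = 0 ∨ a < ν x := Submodule.mem_iff_of_coe_eq (hRgt _)
  intro t ht
  by_cases ht0 : t = 0
  · exact ht0 ▸ A.zero_mem
  induction hn : finrank k ↥(V ⊓ Rge (ν t)) using Nat.strong_induction_on generalizing t with
  | _ n ih =>
  obtain ⟨u, huA, huV, hu0, hνu⟩ := hatt t ht ht0
  have huRgt : u ∉ Rgt (ν t) := by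
    rw [hgt, not_or, hνu]
    exact ⟨hu0, lt_irrefl _⟩
  obtain ⟨c, hc⟩ := Submodule.exists_sub_smul_mem_of_rank_quotient_le_one (hleaf (ν t))
    (hge.mpr (Or.inr le_rfl)) (hge.mpr (Or.inr hνu.ge)) huRgt
  rw [← add_sub_cancel (c • u) t]
  refine A.add_mem (A.smul_mem c huA) ?_
  by_cases hr0 : t - c • u = 0
  · exact hr0 ▸ A.zero_mem
  have hlt : ν t < ν (t - c • u) := (hgt.mp hc).resolve_left hr0
  have hrV : t - c • u ∈ V := V.sub_mem ht (V.smul_mem c huV)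
  exact ih _ (hn ▸ finrank_inf_lt_of_lt_val hRge ht ht0 hlt) hrV hr0 rfl

end Descent

section Multiplicative

variable {R Γ : Type*} [CommMonoidWithZero R] [Nontrivial R] [AddCancelCommMonoid Γ] {ν : R → Γ}

lemma val_one_of_val_mul (hmul : ∀ s t : R, s ≠ 0 → t ≠ 0 → ν (s * t) = ν s + ν t) :
    ν 1 = 0 := by
  have h := hmul 1 1 one_ne_zero one_ne_zero
  rw [mul_one] at h
  exact add_eq_left.mp h.symm

lemma val_pow_of_val_mul [NoZeroDivisors R]
    (hmul : ∀ s t : R, s ≠ 0 → t ≠ 0 → ν (s * t) = ν s + ν t)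
    {x : R} (hx : x ≠ 0) (n : ℕ) : ν (x ^ n) = n • ν x := by
  induction n with
  | zero => simpa using val_one_of_val_mul hmul
  | succ n ih => rw [pow_succ, hmul _ _ (pow_ne_zero _ hx) hx, ih, succ_nsmul]

lemma val_prod_of_val_mul [NoZeroDivisors R]
    (hmul : ∀ s t : R, s ≠ 0 → t ≠ 0 → ν (s * t) = ν s + ν t)
    {ι : Type*} (F : Finset ι) {f : ι → R} (hf : ∀ i ∈ F, f i ≠ 0) :
    ν (∏ i ∈ F, f i) = ∑ i ∈ F, ν (f i) := by
  classical
  induction F using Finset.induction with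
  | empty => simpa using val_one_of_val_mul hmul
  | insert j F hj ih =>
    rw [Finset.forall_mem_insert] at hf
    rw [Finset.prod_insert hj, Finset.sum_insert hj,
      hmul _ _ hf.1 (Finset.prod_ne_zero_iff.mpr hf.2), ih hf.2]

lemma val_prod_pow_of_val_mul [NoZeroDivisors R]
    (hmul : ∀ s t : R, s ≠ 0 → t ≠ 0 → ν (s * t) = ν s + ν t)
    {ι : Type*} (F : Finset ι) {f : ι → R} (hf : ∀ i ∈ F, f i ≠ 0) (m : ι → ℕ) :
    ν (∏ i ∈ F, f i ^ m i) = ∑ i ∈ F, m i • ν (f i) := by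
  rw [val_prod_of_val_mul hmul F fun i hi => pow_ne_zero _ (hf i hi)]
  exact Finset.sum_congr rfl fun i hi => val_pow_of_val_mul hmul (hf i hi) (m i)

end Multiplicative

lemma Subalgebra.eq_top_of_forall_graded_le {ι k R : Type*} [DecidableEq ι]
    [CommSemiring k] [Semiring R] [Algebra k R] (Rg : ι → Submodule k R)
    [DirectSum.Decomposition Rg]
    {A : Subalgebra k R} (h : ∀ i, Rg i ≤ Subalgebra.toSubmodule A) : A = ⊤ := by
  rw [← Algebra.toSubmodule_eq_top, eq_top_iff,
    ← (DirectSum.Decomposition.isInternal Rg).submodule_iSup_eq_top]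
  exact iSup_le h

theorem adjoin_eq_top_of_valuation_semigroup_generated_general
    {k R Γ D : Type*} [Field k] [CommRing R] [IsDomain R] [Algebra k R]
    [AddCommGroup Γ] [LinearOrder Γ] [AddCommMonoid D] [DecidableEq D]
    (Rg : D → Submodule k R) [GradedAlgebra Rg]
    (hfin : ∀ d : D, FiniteDimensional k (Rg d))
    (ν : R → Γ)
    (hmul : ∀ s t : R, s ≠ 0 → t ≠ 0 → ν (s * t) = ν s + ν t)
    (Rge Rgt : Γ → Submodule k R)
    (hRge : ∀ a : Γ, (Rge a : Set R) = {0} ∪ {s : R | s ≠ 0 ∧ a ≤ ν s})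
    (hRgt : ∀ a : Γ, (Rgt a : Set R) = {0} ∪ {s : R | s ≠ 0 ∧ a < ν s})
    (hleaf : ∀ a : Γ,
      Module.rank k (↥(Rge a) ⧸ (Rgt a).comap (Rge a).subtype) ≤ 1)
    {l : ℕ} (s : Fin l → R) (hs0 : ∀ j, s j ≠ 0)
    (dg : Fin l → D) (hhom : ∀ j, s j ∈ Rg (dg j))
    (hgen : ∀ (e : D), ∀ γ ∈ ν '' ((Rg e : Set R) \ {0}),
      ∃ m : Fin l → ℕ, (∑ j, m j • dg j) = e ∧ (∑ j, m j • ν (s j)) = γ) :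
    Algebra.adjoin k (Set.range s) = ⊤ := by
  set A := Algebra.adjoin k (Set.range s)
  refine Subalgebra.eq_top_of_forall_graded_le Rg fun e => ?_
  have := hfin e
  refine le_of_forall_val_attained hRge hRgt hleaf fun t ht ht0 => ?_
  obtain ⟨m, hmd, hmγ⟩ := hgen e (ν t) ⟨t, ⟨ht, ht0⟩, rfl⟩
  refine ⟨∏ j, s j ^ m j, ?_, ?_, ?_, ?_⟩
  · exact A.prod_mem fun j _ => A.pow_mem (Algebra.subset_adjoin ⟨j, rfl⟩) _
  · exact hmd ▸ SetLike.prod_pow_mem_graded Rg dg s m fun j _ => hhom j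
  · exact Finset.prod_ne_zero_iff.mpr fun j _ => pow_ne_zero _ (hs0 j)
  · rw [val_prod_pow_of_val_mul hmul _ fun j _ => hs0 j, hmγ]

/-- The algebraic engine of Proposition 5.2: if homogeneous elements `s 1, …, s l` of a
graded domain `R` realize (via monomials) every valuation vector of every graded piece,
then they generate `R` as a `k`-algebra. -/
theorem adjoin_eq_top_of_valuation_semigroup_generated
    {k R Γ D : Type*} [Field k] [CommRing R] [IsDomain R] [Algebra k R]
    [AddCommGroup Γ] [LinearOrder Γ] [IsOrderedAddMonoid Γ] [AddCommMonoid D] [DecidableEq D]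
    (Rg : D → Submodule k R) [GradedAlgebra Rg]
    (hfin : ∀ d : D, FiniteDimensional k (Rg d))
    (ν : R → Γ)
    (hscal : ∀ (c : k) (s : R), c ≠ 0 → s ≠ 0 → ν (c • s) = ν s)
    (hadd : ∀ s t : R, s ≠ 0 → t ≠ 0 → s + t ≠ 0 → min (ν s) (ν t) ≤ ν (s + t))
    (hmul : ∀ s t : R, s ≠ 0 → t ≠ 0 → ν (s * t) = ν s + ν t)
    (Rge Rgt : Γ → Submodule k R)
    (hRge : ∀ a : Γ, (Rge a : Set R) = {0} ∪ {s : R | s ≠ 0 ∧ a ≤ ν s})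
    (hRgt : ∀ a : Γ, (Rgt a : Set R) = {0} ∪ {s : R | s ≠ 0 ∧ a < ν s})
    (hleaf : ∀ a : Γ,
      Module.rank k (↥(Rge a) ⧸ (Rgt a).comap (Rge a).subtype) ≤ 1)
    {l : ℕ} (s : Fin l → R) (hs0 : ∀ j, s j ≠ 0)
    (dg : Fin l → D) (hhom : ∀ j, s j ∈ Rg (dg j))
    (hgen : ∀ (e : D), ∀ γ ∈ ν '' ((Rg e : Set R) \ {0}),
      ∃ m : Fin l → ℕ, (∑ j, m j • dg j) = e ∧ (∑ j, m j • ν (s j)) = γ) :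
    Algebra.adjoin k (Set.range s) = ⊤ :=
  adjoin_eq_top_of_valuation_semigroup_generated_general Rg hfin ν hmul Rge Rgt hRge hRgt hleaf s
    hs0 dg hhom hgen
end

section
/- For every i ∈ ℤ, the submodule Σ_{(i₁,…,i_m) ∈ ℤ^m, i₁+⋯+i_m=i} W(i₁)·W(i₂)⋯W(i_m) of k[x,y] (sum of products of submodules, each summand lying in k[x,y]_m) equals: k[x,y]_m if i ≤ am; the subspace {g ∈ k[x,y]_m : f^{⌈(i−am)/(b−a)⌉} divides g} if am < i ≤ bm; and 0 if i > bm. (This is the content of Example 3.5 of the paper: the Klyachko filtration of Sym^m(E) for a rank two toric vector bundle E whose filtration along a ray is E for i ≤ a, a line V for a < i ≤ b, and 0 for i > b, expressed in polynomial terms via the identification Sym^m E ≅ k[x,y]_m sending V to the span of f.) -/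
/-!
A product `∏ W (t h)` with all `t h ≤ b` equals `f ^ s · k[x,y]_{m-s}`, where `s` counts the
`t h > a`. Since `∑ t h ≤ s b + (m - s) a`, every such `s` is at least `c := ⌈(i - a m)/(b - a)⌉`,
and some `t` gives `s ≤ c`. As `k[x,y]` is graded, `f ^ s · k[x,y]_{m-s}` is the space of degree `m`
forms divisible by `f ^ s`, which decreases in `s`; so the sum is `f ^ c · k[x,y]_{m-c}`.
-/

open MvPolynomial Submodule Finset

attribute [local instance] MvPolynomial.gradedAlgebra

section Graded

variable {R A : Type*} [CommSemiring R] [Semiring A] [Algebra R A]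
  (𝒜 : ℕ → Submodule R A) [GradedAlgebra 𝒜]

theorem mem_span_singleton_mul_grade_iff {p g : A} {c n : ℕ} (hp : p ∈ 𝒜 c) :
    g ∈ span R {p} * 𝒜 n ↔ g ∈ 𝒜 (c + n) ∧ p ∣ g := by
  rw [mem_span_singleton_mul]
  constructor
  · rintro ⟨q, hq, rfl⟩
    exact ⟨SetLike.mul_mem_graded hp hq, dvd_mul_right p q⟩
  · rintro ⟨hg, q, rfl⟩
    refine ⟨DirectSum.decompose 𝒜 q n, SetLike.coe_mem _, ?_⟩
    rw [← Nat.add_sub_cancel_left (n := c) (m := n),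
      ← DirectSum.coe_decompose_mul_of_left_mem_of_le 𝒜 hp (Nat.le_add_right c n),
      DirectSum.decompose_of_mem_same 𝒜 hg]

theorem span_pow_mul_grade_le {f : A} (hf : f ∈ 𝒜 1) {c s n n' : ℕ} (hcs : c ≤ s)
    (hdeg : s + n = c + n') : span R {f ^ s} * 𝒜 n ≤ span R {f ^ c} * 𝒜 n' := by
  have hpow : ∀ e, f ^ e ∈ 𝒜 e := fun e => by
    simpa using SetLike.pow_mem_graded e hf
  intro g hg
  rw [mem_span_singleton_mul_grade_iff 𝒜 (hpow s)] at hg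
  rw [mem_span_singleton_mul_grade_iff 𝒜 (hpow c), ← hdeg]
  exact ⟨hg.1, (pow_dvd_pow f hcs).trans hg.2⟩

end Graded

theorem sum_le_card_mul_add_card_mul {ι : Type*} [Fintype ι] {a b : ℤ} {t : ι → ℤ}
    (ht : ∀ h, t h ≤ b) : ∑ h, t h ≤ #{h | a < t h} * b + #{h | ¬a < t h} * a := by
  calc ∑ h, t h ≤ ∑ h, if a < t h then b else a :=
        sum_le_sum fun h _ => by split_ifs with hh <;> simp_all
    _ = _ := by simp [sum_ite]

theorem exists_sum_eq_card_lt_le {m c : ℕ} (hm : 0 < m) (hcm : c ≤ m) {a b i : ℤ}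
    (hab : a ≤ b) (hi : i - a * m ≤ c * (b - a)) :
    ∃ t : Fin m → ℤ, ∑ h, t h = i ∧ (∀ h, t h ≤ b) ∧ #{h | a < t h} ≤ c := by
  set t₀ : Fin m → ℤ := fun h => a + if (h : ℕ) < c then b - a else 0
  have hsum₀ : ∑ h, t₀ h = a * m + c * (b - a) := by
    simp [t₀, sum_add_distrib, sum_ite, Fin.card_filter_val_lt, min_eq_right hcm]
    ring
  set t : Fin m → ℤ := fun h => t₀ h - if h = ⟨0, hm⟩ then ∑ h, t₀ h - i else 0
  have hle : ∀ h, t h ≤ t₀ h := fun h => by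
    simp only [t]; split_ifs <;> omega
  refine ⟨t, by simp [t, sum_sub_distrib], fun h => ?_, ?_⟩
  · refine (hle h).trans ?_
    simp only [t₀]; split_ifs <;> omega
  · calc #{h | a < t h} ≤ #{h : Fin m | (h : ℕ) < c} := by
          refine card_le_card fun h => ?_
          simp only [mem_filter, mem_univ, true_and]
          intro hh
          by_contra hc
          have := hle h
          simp only [t₀, hc, if_false] at this
          omega
      _ = c := by rw [Fin.card_filter_val_lt, min_eq_right hcm]

/-- The filtration of `Sym^m` induced by `W`, with `Sym^m` realised by `m`-fold products of
submodules of the commutative algebra `A`. -/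
def symPowFiltration {R A : Type*} [CommSemiring R] [CommSemiring A] [Algebra R A]
    (W : ℤ → Submodule R A) (m : ℕ) (i : ℤ) : Submodule R A :=
  ⨆ t ∈ {t : Fin m → ℤ | ∑ h, t h = i}, ∏ h, W (t h)

theorem Int.toNat_ceil_div_le_iff {x d : ℤ} (hd : 0 < d) (s : ℕ) :
    ⌈(x : ℚ) / d⌉.toNat ≤ s ↔ x ≤ s * d := by
  rw [Int.toNat_le, Int.ceil_le, div_le_iff₀ (by exact_mod_cast hd)]
  exact_mod_cast Iff.rfl

section RankTwo

variable {σ R : Type*} [CommSemiring R] {f : MvPolynomial σ R} {a b : ℤ}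
  {W : ℤ → Submodule R (MvPolynomial σ R)}

theorem prod_eq_bot_of_lt {ι : Type*} [Fintype ι] (hWc : ∀ i, b < i → W i = ⊥) {t : ι → ℤ}
    {h₀ : ι} (h₀b : b < t h₀) : ∏ h, W (t h) = ⊥ :=
  prod_eq_zero (mem_univ h₀) (hWc _ h₀b)

theorem prod_eq_span_pow_mul_homogeneousSubmodule {ι : Type*} [Fintype ι]
    (hWa : ∀ i, i ≤ a → W i = homogeneousSubmodule σ R 1)
    (hWb : ∀ i, a < i → i ≤ b → W i = span R {f}) {t : ι → ℤ} (ht : ∀ h, t h ≤ b) :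
    ∏ h, W (t h) = span R {f ^ #{h | a < t h}} * homogeneousSubmodule σ R #{h | ¬a < t h} := by
  have hW : ∀ h, W (t h) = if a < t h then span R {f} else homogeneousSubmodule σ R 1 :=
    fun h => by split_ifs with hh; exacts [hWb _ hh (ht h), hWa _ (not_lt.1 hh)]
  rw [prod_congr rfl fun h _ => hW h, prod_ite, prod_const, prod_const, span_pow,
    Set.singleton_pow, homogeneousSubmodule_one_pow]

theorem symPowFiltration_eq_bot {m : ℕ} {i : ℤ} (hWc : ∀ i, b < i → W i = ⊥) (hi : b * m < i) :
    symPowFiltration W m i = ⊥ := by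
  refine iSup₂_eq_bot.2 fun t (ht : ∑ h, t h = i) => ?_
  obtain ⟨h₀, -, h₀b⟩ : ∃ h₀ ∈ univ, b < t h₀ :=
    exists_lt_of_sum_lt (by simpa [ht, mul_comm] using hi)
  exact prod_eq_bot_of_lt hWc h₀b

theorem symPowFiltration_eq_span_pow_mul_homogeneousSubmodule
    (hf : f ∈ homogeneousSubmodule σ R 1) (hab : a < b) {m : ℕ} (hm : 1 ≤ m)
    (hWa : ∀ i, i ≤ a → W i = homogeneousSubmodule σ R 1)
    (hWb : ∀ i, a < i → i ≤ b → W i = span R {f}) (hWc : ∀ i, b < i → W i = ⊥)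
    {i : ℤ} (hi : i ≤ b * m) :
    symPowFiltration W m i =
      span R {f ^ ⌈((i - a * m : ℤ) : ℚ) / ((b - a : ℤ) : ℚ)⌉.toNat} *
        homogeneousSubmodule σ R (m - ⌈((i - a * m : ℤ) : ℚ) / ((b - a : ℤ) : ℚ)⌉.toNat) := by
  set c := ⌈((i - a * m : ℤ) : ℚ) / ((b - a : ℤ) : ℚ)⌉.toNat
  have hc : ∀ s : ℕ, c ≤ s ↔ i - a * m ≤ s * (b - a) :=
    Int.toNat_ceil_div_le_iff (sub_pos.2 hab)
  have hcm : c ≤ m := (hc m).2 (by linarith)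
  have hcard : ∀ t : Fin m → ℤ, #{h | a < t h} + #{h | ¬a < t h} = m := fun t => by
    simpa using card_filter_add_card_filter_not (s := univ) (fun h => a < t h)
  apply le_antisymm
  · refine iSup₂_le fun t (ht : ∑ h, t h = i) => ?_
    by_cases htb : ∀ h, t h ≤ b
    · rw [prod_eq_span_pow_mul_homogeneousSubmodule hWa hWb htb]
      refine span_pow_mul_grade_le _ hf ((hc _).2 ?_) (by rw [hcard]; omega)
      have hsum := ht ▸ sum_le_card_mul_add_card_mul (a := a) htb
      have hm : (m : ℤ) = #{h | a < t h} + #{h | ¬a < t h} := by exact_mod_cast (hcard t).symm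
      linear_combination hsum - a * hm
    · push Not at htb
      obtain ⟨h₀, h₀b⟩ := htb
      rw [prod_eq_bot_of_lt hWc h₀b]
      exact bot_le
  · obtain ⟨t, ht, htb, htc⟩ := exists_sum_eq_card_lt_le hm hcm hab.le ((hc c).1 le_rfl)
    refine le_iSup₂_of_le t ht ?_
    rw [prod_eq_span_pow_mul_homogeneousSubmodule hWa hWb htb]
    exact span_pow_mul_grade_le _ hf htc (by rw [hcard]; omega)

end RankTwo

theorem sym_filtration_rank_two_general
    {k : Type*} [Field k] (f : MvPolynomial (Fin 2) k)
    (hf1 : f.IsHomogeneous 1)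
    (a b : ℤ) (hab : a < b) (m : ℕ) (hm : 1 ≤ m)
    (W : ℤ → Submodule k (MvPolynomial (Fin 2) k))
    (hWa : ∀ i : ℤ, i ≤ a → W i = MvPolynomial.homogeneousSubmodule (Fin 2) k 1)
    (hWb : ∀ i : ℤ, a < i → i ≤ b → W i = Submodule.span k {f})
    (hWc : ∀ i : ℤ, b < i → W i = ⊥)
    (i : ℤ) :
    (i ≤ a * m →
      (⨆ t ∈ {t : Fin m → ℤ | ∑ h, t h = i}, ∏ h, W (t h)) =
        MvPolynomial.homogeneousSubmodule (Fin 2) k m) ∧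
    (a * m < i → i ≤ b * m →
      ((⨆ t ∈ {t : Fin m → ℤ | ∑ h, t h = i}, ∏ h, W (t h) :
          Submodule k (MvPolynomial (Fin 2) k)) : Set (MvPolynomial (Fin 2) k)) =
        {g | g ∈ MvPolynomial.homogeneousSubmodule (Fin 2) k m ∧
          f ^ (⌈(((i - a * m : ℤ) : ℚ)) / (((b - a : ℤ) : ℚ))⌉.toNat) ∣ g}) ∧
    (b * m < i →
      (⨆ t ∈ {t : Fin m → ℤ | ∑ h, t h = i}, ∏ h, W (t h)) = ⊥) := by
  rw [show (⨆ t ∈ {t : Fin m → ℤ | ∑ h, t h = i}, ∏ h, W (t h)) = symPowFiltration W m i from rfl]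
  have hf : f ∈ homogeneousSubmodule (Fin 2) k 1 := hf1
  have hbam : 0 ≤ (b - a) * m := mul_nonneg (sub_pos.2 hab).le m.cast_nonneg
  have hc := Int.toNat_ceil_div_le_iff (x := i - a * m) (sub_pos.2 hab)
  refine ⟨fun hi => ?_, fun hi₁ hi₂ => ?_, symPowFiltration_eq_bot hWc⟩
  · rw [symPowFiltration_eq_span_pow_mul_homogeneousSubmodule hf hab hm hWa hWb hWc (by linarith),
      Nat.le_zero.1 ((hc 0).2 (by simpa using hi)), pow_zero, ← one_eq_span, one_mul,
      Nat.sub_zero]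
  · ext g
    have hcm := (hc m).2 (by linarith)
    rw [SetLike.mem_coe, symPowFiltration_eq_span_pow_mul_homogeneousSubmodule hf hab hm hWa hWb hWc
      hi₂, mem_span_singleton_mul_grade_iff _ (SetLike.pow_mem_graded _ hf), smul_eq_mul, mul_one,
      Nat.add_sub_cancel' hcm]
    exact Iff.rfl

/-- Example 3.5: the Klyachko filtration of `Sym^m E` for a rank two toric vector
bundle, expressed in `k[x,y]`. Here `W i` is the degree-one filtration (all of
`k[x,y]₁` for `i ≤ a`, the line `k·f` for `a < i ≤ b`, and `0` for `i > b`), and the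
`m`-fold sum of products `Σ_{i₁+⋯+i_m=i} W i₁ ⋯ W i_m` is computed in the three
ranges of `i`. -/
theorem sym_filtration_rank_two
    {k : Type*} [Field k] (f : MvPolynomial (Fin 2) k)
    (hf1 : f.IsHomogeneous 1) (hf0 : f ≠ 0)
    (a b : ℤ) (hab : a < b) (m : ℕ) (hm : 1 ≤ m)
    (W : ℤ → Submodule k (MvPolynomial (Fin 2) k))
    (hWa : ∀ i : ℤ, i ≤ a → W i = MvPolynomial.homogeneousSubmodule (Fin 2) k 1)
    (hWb : ∀ i : ℤ, a < i → i ≤ b → W i = Submodule.span k {f})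
    (hWc : ∀ i : ℤ, b < i → W i = ⊥)
    (i : ℤ) :
    (i ≤ a * m →
      (⨆ t ∈ {t : Fin m → ℤ | ∑ h, t h = i}, ∏ h, W (t h)) =
        MvPolynomial.homogeneousSubmodule (Fin 2) k m) ∧
    (a * m < i → i ≤ b * m →
      ((⨆ t ∈ {t : Fin m → ℤ | ∑ h, t h = i}, ∏ h, W (t h) :
          Submodule k (MvPolynomial (Fin 2) k)) : Set (MvPolynomial (Fin 2) k)) =
        {g | g ∈ MvPolynomial.homogeneousSubmodule (Fin 2) k m ∧
          f ^ (⌈(((i - a * m : ℤ) : ℚ)) / (((b - a : ℤ) : ℚ))⌉.toNat) ∣ g}) ∧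
    (b * m < i →
      (⨆ t ∈ {t : Fin m → ℤ | ∑ h, t h = i}, ∏ h, W (t h)) = ⊥) :=
  sym_filtration_rank_two_general f hf1 a b hab m hm W hWa hWb hWc i
end
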